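/- The graph H_{2n,2n+2} (the circulant graph on 2n+2 vertices where vertex i is joined to vertex j whenever i − n ≤ j ≤ i + n modulo 2n+2, i.e., K_{2n+2} minus a perfect matching) is distance magic with magic constant 2n² + 3n, witnessed by the labeling f(v_i) = 2n+2−i for 0 ≤ i ≤ n and f(v_i) = i−n for n+1 ≤ i ≤ 2n+1. -/

import Mathlib

/-!
Every vertex `u` of `H_{2n,2n+2} = K_{2n+2} - M` is adjacent to all vertices except itself and its
antipode `u + (n + 1)`, and the labelling satisfies `f u + f (u + (n + 1)) = 2n + 3`. Hence every
weight equals `(1 + ⋯ + (2n + 2)) - (2n + 3) = (n + 1)(2n + 3) - (2n + 3) = 2n² + 3n`.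
-/

open scoped Classical
open Finset

/-- Weight of a vertex: sum of labels over its open neighborhood. -/
noncomputable def wsum {V : Type*} [Fintype V] (G : SimpleGraph V) (f : V → ℕ) (u : V) : ℕ :=
  ∑ v ∈ Finset.univ.filter (fun v => G.Adj u v), f v

/-- A graph is distance magic if some bijective labeling by 1,...,n has constant weights. -/
def IsDistanceMagic {V : Type*} [Fintype V] (G : SimpleGraph V) : Prop :=
  ∃ (f : V ≃ Fin (Fintype.card V)) (c : ℕ),
    ∀ u, wsum G (fun v => (f v : ℕ) + 1) u = c

/-- `G` is `r`-regular. -/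
def IsRegularDeg {V : Type*} [Fintype V] (G : SimpleGraph V) (r : ℕ) : Prop :=
  ∀ u : V, (Finset.univ.filter (fun v => G.Adj u v)).card = r

/-- `(a,d)`-distance antimagic: some bijective labeling by 1,...,n has weight set
`{a, a+d, ..., a+(n-1)d}`. -/
def IsDistAntimagic {V : Type*} [Fintype V] (G : SimpleGraph V) (a d : ℕ) : Prop :=
  ∃ f : V ≃ Fin (Fintype.card V),
    Finset.image (fun u => wsum G (fun v => (f v : ℕ) + 1) u) Finset.univ
      = Finset.image (fun i : Fin (Fintype.card V) => a + (i : ℕ) * d) Finset.univ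

/-- Circulant graph on `N` vertices with jumps `1,...,m` (so `H_{2m,N} = C_N^m`). -/
def circulant (N m : ℕ) : SimpleGraph (Fin N) :=
  SimpleGraph.fromRel (fun i j => ∃ k, 1 ≤ k ∧ k ≤ m ∧ ((i : ℕ) + k) % N = (j : ℕ))

/-- The graph `(K_{n-1} - M) + K_1`: vertex `0` joined to all, and vertices `1,...,n-1`
forming a complete graph minus the perfect matching pairing `i` with `i + (n-1)/2 (mod n-1)`. -/
def calG (n : ℕ) : SimpleGraph (Fin n) :=
  SimpleGraph.fromRel (fun i j =>
    (i : ℕ) = 0 ∨ (j : ℕ) = 0 ∨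
      ¬ (((i : ℕ) - 1 + (n - 1) / 2) % (n - 1) = (j : ℕ) - 1))

/-- Lexicographic product `G ∘ H`. -/
def lexProd {α β : Type*} (G : SimpleGraph α) (H : SimpleGraph β) : SimpleGraph (α × β) where
  Adj x y := G.Adj x.1 y.1 ∨ (x.1 = y.1 ∧ H.Adj x.2 y.2)
  symm := ⟨by
    rintro ⟨a, b⟩ ⟨c, d⟩ (h | ⟨h1, h2⟩)
    · exact Or.inl h.symm
    · exact Or.inr ⟨h1.symm, h2.symm⟩⟩
  loopless := ⟨by
    rintro ⟨a, b⟩ (h | ⟨-, h⟩)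
    · exact h.ne rfl
    · exact h.ne rfl⟩

/-- Direct (tensor) product `G × H`. -/
def tensorProd {α β : Type*} (G : SimpleGraph α) (H : SimpleGraph β) : SimpleGraph (α × β) where
  Adj x y := G.Adj x.1 y.1 ∧ H.Adj x.2 y.2
  symm := ⟨fun _ _ h => ⟨h.1.symm, h.2.symm⟩⟩
  loopless := ⟨fun x h => h.1.ne rfl⟩

/-- The Harary graph `H_{3,n}`. -/
noncomputable def harary3 (n : ℕ) : SimpleGraph (Fin n) :=
  circulant n 1 ⊔ SimpleGraph.fromRel (fun i j =>
    if n % 2 = 0 then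
      ∃ k, 1 ≤ k ∧ k ≤ n / 2 ∧ (i : ℕ) = k ∧ (j : ℕ) = (k + n / 2) % n
    else
      ((i : ℕ) = 0 ∧ ((j : ℕ) = (n - 1) / 2 ∨ (j : ℕ) = (n + 1) / 2)) ∨
      (∃ k, 1 ≤ k ∧ k < (n - 1) / 2 ∧ (i : ℕ) = k ∧ (j : ℕ) = (k + (n + 1) / 2) % n))

/-- The Harary graph `H_{2n+1,2n+3}`: `C_{2n+3}^n` together with edges `v_0 v_{n+1}`,
`v_0 v_{n+2}` and `v_i v_{i+n+2}` for `1 ≤ i < n+1`. -/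
def hararyOdd (n : ℕ) : SimpleGraph (Fin (2 * n + 3)) :=
  circulant (2 * n + 3) n ⊔ SimpleGraph.fromRel (fun i j =>
    ((i : ℕ) = 0 ∧ ((j : ℕ) = n + 1 ∨ (j : ℕ) = n + 2)) ∨
    (∃ k, 1 ≤ k ∧ k < n + 1 ∧ (i : ℕ) = k ∧ (j : ℕ) = k + n + 2))

/-- The Harary graph `H_{4n+1,4n+4}`: circulant with jumps `1,...,2n` and `2n+2`. -/
def harary41 (n : ℕ) : SimpleGraph (Fin (4 * n + 4)) :=
  SimpleGraph.fromRel (fun i j =>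
    ∃ k, ((1 ≤ k ∧ k ≤ 2 * n) ∨ k = 2 * n + 2) ∧ ((i : ℕ) + k) % (4 * n + 4) = (j : ℕ))

/-- The join `G + K_1`. -/
def joinK1 {V : Type*} (G : SimpleGraph V) : SimpleGraph (V ⊕ Unit) :=
  SimpleGraph.fromRel (fun x y =>
    match x, y with
    | Sum.inl a, Sum.inl b => G.Adj a b
    | Sum.inl _, Sum.inr _ => True
    | Sum.inr _, _ => False)

theorem wsum_add_add_eq_sum {V : Type*} [Fintype V] (G : SimpleGraph V) (f : V → ℕ) {u w : V}
    (huw : u ≠ w) (hadj : ∀ v, G.Adj u v ↔ v ≠ u ∧ v ≠ w) :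
    wsum G f u + (f u + f w) = ∑ v, f v := by
  have hnbhd : univ.filter (G.Adj u) = univ \ {u, w} := by ext v; simp [hadj]
  rw [wsum, hnbhd, ← sum_pair huw, sum_sdiff (subset_univ _)]

theorem sum_mul_two_of_bijOn_Icc {ι : Type*} [Fintype ι] {f : ι → ℕ} {N : ℕ}
    (hf : Set.BijOn f Set.univ (Set.Icc 1 N)) : (∑ i, f i) * 2 = N * (N + 1) := by
  have hsum : ∑ i, f i = ∑ k ∈ range (N + 1), k := by
    rw [range_eq_Ico, sum_eq_sum_Ico_succ_bot (by omega : 0 < N + 1), zero_add,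
      Finset.Ico_add_one_right_eq_Icc]
    refine sum_nbij f (fun i _ => ?_) ?_ ?_ (fun _ _ => rfl)
    · simpa using hf.mapsTo (Set.mem_univ i)
    · simpa using hf.injOn
    · simpa using hf.surjOn
  rw [hsum, sum_range_id_mul_two, Nat.add_sub_cancel, mul_comm]

theorem exists_add_mod_eq_iff {N m : ℕ} [NeZero N] (hm : m < N) (u v : Fin N) :
    (∃ k, 1 ≤ k ∧ k ≤ m ∧ ((u : ℕ) + k) % N = v) ↔
      1 ≤ (v - u).val ∧ (v - u).val ≤ m := by
  constructor
  · rintro ⟨k, hk1, hkm, hk⟩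
    have hv : v = u + Fin.ofNat N k := by
      ext
      rw [Fin.val_add, Fin.val_ofNat, Nat.mod_eq_of_lt (show k < N by omega), hk]
    rw [hv, add_sub_cancel_left, Fin.val_ofNat, Nat.mod_eq_of_lt (by omega)]
    exact ⟨hk1, hkm⟩
  · rintro ⟨h1, h2⟩
    exact ⟨(v - u).val, h1, h2, by rw [← Fin.val_add, add_sub_cancel]⟩

theorem circulant_eq_circulantGraph {N m : ℕ} [NeZero N] (hm : m < N) :
    circulant N m = SimpleGraph.circulantGraph {d : Fin N | 1 ≤ d.val ∧ d.val ≤ m} := by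
  ext u v
  rw [circulant, SimpleGraph.fromRel_adj, SimpleGraph.circulantGraph_adj,
    exists_add_mod_eq_iff hm, exists_add_mod_eq_iff hm]
  simp only [Set.mem_ofPred_eq, or_comm]

def antipode {m : ℕ} (u : Fin (2 * m + 2)) : Fin (2 * m + 2) :=
  u + ⟨m + 1, by omega⟩

theorem val_antipode {m : ℕ} (u : Fin (2 * m + 2)) :
    (antipode u : ℕ) = if (u : ℕ) ≤ m then u + (m + 1) else u - (m + 1) := by
  rw [antipode, Fin.val_add, Nat.add_mod_eq_ite, Nat.mod_eq_of_lt u.isLt,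
    Nat.mod_eq_of_lt (show m + 1 < 2 * m + 2 by omega)]
  split_ifs <;> omega

theorem self_ne_antipode {m : ℕ} (u : Fin (2 * m + 2)) : u ≠ antipode u := by
  intro h
  have hval := congrArg Fin.val h
  rw [val_antipode] at hval
  split_ifs at hval <;> omega

theorem circulant_adj_iff_ne_antipode (m : ℕ) (u v : Fin (2 * m + 2)) :
    (circulant (2 * m + 2) m).Adj u v ↔ v ≠ u ∧ v ≠ antipode u := by
  rw [antipode, circulant_eq_circulantGraph (by omega), SimpleGraph.circulantGraph_adj,
    ← neg_sub v u, eq_comm, Ne, Ne, ← sub_eq_zero, ← sub_eq_iff_eq_add']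
  generalize v - u = d
  obtain rfl | hd := eq_or_ne d 0
  · simp
  · -- `d` and `-d` have values `d` and `2m + 2 - d`, both outside `[1, m]` exactly for `d = m + 1`
    have hd' : d.val ≠ 0 := Fin.val_ne_of_ne hd
    simp only [Set.mem_ofPred_eq, Fin.ext_iff, Fin.val_neg', Fin.val_zero]
    rw [Nat.mod_eq_of_lt (by omega)]
    omega

def hararyLabel (n : ℕ) (i : Fin (2 * n + 2)) : ℕ :=
  if (i : ℕ) ≤ n then 2 * n + 2 - (i : ℕ) else (i : ℕ) - n

theorem hararyLabel_bijOn (n : ℕ) :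
    Set.BijOn (hararyLabel n) Set.univ (Set.Icc 1 (2 * n + 2)) := by
  refine ⟨fun i _ => ?_, fun i _ j _ h => ?_, fun k hk => ?_⟩
  · have := i.isLt
    simp only [hararyLabel, Set.mem_Icc]
    split_ifs <;> omega
  · have := i.isLt
    have := j.isLt
    simp only [hararyLabel] at h
    split_ifs at h <;> exact Fin.ext (by omega)
  · obtain ⟨hk1, hk2⟩ := hk
    by_cases hkn : k ≤ n + 1
    · refine ⟨⟨k + n, by omega⟩, Set.mem_univ _, ?_⟩
      simp only [hararyLabel]
      split_ifs <;> omega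
    · refine ⟨⟨2 * n + 2 - k, by omega⟩, Set.mem_univ _, ?_⟩
      simp only [hararyLabel]
      split_ifs <;> omega

theorem hararyLabel_add_hararyLabel_antipode (n : ℕ) (u : Fin (2 * n + 2)) :
    hararyLabel n u + hararyLabel n (antipode u) = 2 * n + 3 := by
  have := u.isLt
  simp only [hararyLabel, val_antipode]
  split_ifs <;> omega

/-- H_{2n,2n+2} is distance magic with constant 2n^2+3n, witnessed by the
labeling f(v_i) = 2n+2-i for i ≤ n and f(v_i) = i-n for n+1 ≤ i ≤ 2n+1. -/
theorem harary_even_distance_magic (n : ℕ) :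
    Set.BijOn (fun i : Fin (2 * n + 2) =>
        if (i : ℕ) ≤ n then 2 * n + 2 - (i : ℕ) else (i : ℕ) - n)
      Set.univ (Set.Icc 1 (2 * n + 2)) ∧
    (∀ u, wsum (circulant (2 * n + 2) n)
        (fun i => if (i : ℕ) ≤ n then 2 * n + 2 - (i : ℕ) else (i : ℕ) - n) u
      = 2 * n ^ 2 + 3 * n) := by
  refine ⟨hararyLabel_bijOn n, fun u => ?_⟩
  have hweight := wsum_add_add_eq_sum (circulant (2 * n + 2) n) (hararyLabel n)
    (self_ne_antipode u) (circulant_adj_iff_ne_antipode n u)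
  have htotal := sum_mul_two_of_bijOn_Icc (hararyLabel_bijOn n)
  rw [hararyLabel_add_hararyLabel_antipode] at hweight
  change wsum _ (hararyLabel n) u = _
  linarith
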